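/- arXiv:2006.12688 — 6 statements merged into one kernel-verified Lean document; each statement's English description precedes it below -/
import Mathlib

section
/- Let (X, ≤) be a poset and S ⊆ X. Then: (i) if S has no largest element, then ⋁S exists iff ⋁⁺S exists, and when they exist they are equal; conversely, if ⋁S = ⋁⁺S (both existing) then S has no largest element. (ii) If S has a largest element x = max S, then ⋁⁺S exists iff x⁺ exists, and when they exist ⋁⁺S = x⁺; conversely, when ≤ is a total order, if ⋁⁺S = x⁺ then x = max S. (iii) If ⋁⁺(S^↧) exists then ⋁⁺(S^↧) = min S; conversely, when ≤ is a total order, if min S exists then min S = ⋁⁺(S^↧). -/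
namespace Paper

/-- The union `⋃_{i ∈ I} f(i)` of the values of `f` on elements of `I`. -/
noncomputable def unionImage (f : ZFSet → ZFSet) (I : ZFSet) : ZFSet :=
  ZFSet.sUnion (@ZFSet.image f (Classical.allZFSetDefinable _) I)

/-- A universe: a transitive set closed under pairing and under unions of
`𝒰`-indexed families of elements of `𝒰`. -/
def IsUniverse (U : ZFSet) : Prop :=
  U.IsTransitive ∧
  (∀ x ∈ U, ∀ y ∈ U, ({x, y} : ZFSet) ∈ U) ∧
  (∀ I ∈ U, ∀ f : ZFSet → ZFSet, (∀ i ∈ I, f i ∈ U) → unionImage f I ∈ U)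

variable {X : Type*}

/-- `A ∈ P_𝒰(X)`: the subset `A` of the type `X` is in bijection with some element of `𝒰`. -/
def SmallSet (U : ZFSet) (A : Set X) : Prop :=
  ∃ B : ZFSet, B ∈ U ∧ Nonempty (A ≃ B.toSet)

/-- `x < y` in the sense `x ≤ y ∧ x ≠ y`, for an arbitrary relation `le`. -/
def ltR (le : X → X → Prop) (x y : X) : Prop := le x y ∧ x ≠ y

/-- The lower complement `S^↧ = {x | ∀ y ∈ S, x < y}`. -/
def lowerComp (le : X → X → Prop) (S : Set X) : Set X := {x | ∀ y ∈ S, ltR le x y}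

/-- The upper complement `S^↑ = {x | ∀ y ∈ S, y < x}`. -/
def upperComp (le : X → X → Prop) (S : Set X) : Set X := {x | ∀ y ∈ S, ltR le y x}

/-- `b` is the incremented join `⋁⁺S`, i.e. the minimum of `S^↑`. -/
def IsIncJoin (le : X → X → Prop) (S : Set X) (b : X) : Prop :=
  b ∈ upperComp le S ∧ ∀ c ∈ upperComp le S, le b c

/-- `b = x⁺`, i.e. `b = ⋁⁺{x}`. -/
def IsSuccOf (le : X → X → Prop) (x b : X) : Prop := IsIncJoin le {x} b

/-- `b` is the join (least upper bound) of `S`. -/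
def IsJoin (le : X → X → Prop) (S : Set X) (b : X) : Prop :=
  (∀ y ∈ S, le y b) ∧ ∀ c, (∀ y ∈ S, le y c) → le b c

/-- An ordinal system relative to the universe `U`: a partial order satisfying
(O1) lower complements of nonempty subsets lie in `P_𝒰(X)`, and
(O2) every member of `P_𝒰(X)` has an incremented join. -/
def IsOrdinalSystem (U : ZFSet) (le : X → X → Prop) : Prop :=
  IsPartialOrder X le ∧
  (∀ S : Set X, S.Nonempty → SmallSet U (lowerComp le S)) ∧
  (∀ S : Set X, SmallSet U S → ∃ b, IsIncJoin le S b)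

theorem stmt_7 {X : Type*} [PartialOrder X] (S : Set X) :
    -- (i)
    (((¬ ∃ x ∈ S, ∀ y ∈ S, y ≤ x) →
        ((∃ b, IsJoin (· ≤ ·) S b) ↔ ∃ b, IsIncJoin (· ≤ ·) S b) ∧
        (∀ a b, IsJoin (· ≤ ·) S a → IsIncJoin (· ≤ ·) S b → a = b)) ∧
      (∀ b, IsJoin (· ≤ ·) S b → IsIncJoin (· ≤ ·) S b →
        ¬ ∃ x ∈ S, ∀ y ∈ S, y ≤ x)) ∧
    -- (ii)
    ((∀ x, x ∈ S → (∀ y ∈ S, y ≤ x) →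
        ((∃ b, IsIncJoin (· ≤ ·) S b) ↔ ∃ b, IsSuccOf (· ≤ ·) x b) ∧
        (∀ a b, IsIncJoin (· ≤ ·) S a → IsSuccOf (· ≤ ·) x b → a = b)) ∧
      ((∀ x y : X, x ≤ y ∨ y ≤ x) →
        ∀ x b, IsIncJoin (· ≤ ·) S b → IsSuccOf (· ≤ ·) x b →
          x ∈ S ∧ ∀ y ∈ S, y ≤ x)) ∧
    -- (iii)
    ((∀ b, IsIncJoin (· ≤ ·) (lowerComp (· ≤ ·) S) b → IsLeast S b) ∧
      ((∀ x y : X, x ≤ y ∨ y ≤ x) →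
        ∀ b, IsLeast S b → IsIncJoin (· ≤ ·) (lowerComp (· ≤ ·) S) b)) := by
  refine ⟨⟨?_, ?_⟩, ⟨?_, ?_⟩, ?_, ?_⟩
  -- (i) forward
  · intro hnomax
    have hset : ∀ c, c ∈ upperComp (· ≤ ·) S ↔ ∀ y ∈ S, y ≤ c := by
      intro c
      constructor
      · exact fun hc y hy => (hc y hy).1
      · intro hc y hy
        refine ⟨hc y hy, fun h => hnomax ⟨y, hy, fun z hz => ?_⟩⟩
        rw [h]; exact hc z hz
    constructor
    · constructor
      · rintro ⟨b, hb1, hb2⟩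
        exact ⟨b, (hset b).2 hb1, fun c hc => hb2 c ((hset c).1 hc)⟩
      · rintro ⟨b, hb1, hb2⟩
        exact ⟨b, (hset b).1 hb1, fun c hc => hb2 c ((hset c).2 hc)⟩
    · rintro a b ⟨ha1, ha2⟩ ⟨hb1, hb2⟩
      exact le_antisymm (ha2 b ((hset b).1 hb1)) (hb2 a ((hset a).2 ha1))
  -- (i) converse
  · rintro b ⟨hj1, hj2⟩ ⟨hi1, hi2⟩ ⟨x, hx, hmax⟩
    have hxb := hi1 x hx
    exact hxb.2 (le_antisymm hxb.1 (hj2 x hmax))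
  -- (ii) forward
  · intro x hxS hxmax
    have hset : ∀ c, c ∈ upperComp (· ≤ ·) S ↔ c ∈ upperComp (· ≤ ·) ({x} : Set X) := by
      intro c
      constructor
      · intro hc y hy
        rw [Set.mem_singleton_iff] at hy; rw [hy]
        exact hc x hxS
      · intro hc y hy
        have hxc := hc x rfl
        refine ⟨le_trans (hxmax y hy) hxc.1, fun h => ?_⟩
        subst h
        exact hxc.2 (le_antisymm hxc.1 (hxmax y hy))
    constructor
    · constructor
      · rintro ⟨b, hb1, hb2⟩
        exact ⟨b, (hset b).1 hb1, fun c hc => hb2 c ((hset c).2 hc)⟩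
      · rintro ⟨b, hb1, hb2⟩
        exact ⟨b, (hset b).2 hb1, fun c hc => hb2 c ((hset c).1 hc)⟩
    · rintro a b ⟨ha1, ha2⟩ ⟨hb1, hb2⟩
      exact le_antisymm (ha2 b ((hset b).2 hb1)) (hb2 a ((hset a).1 ha1))
  -- (ii) converse
  · rintro htot x b ⟨hb1, hb2⟩ ⟨hs1, hs2⟩
    have hxb := hs1 x rfl
    have hub : ∀ y ∈ S, y ≤ x := by
      intro y hy
      by_contra h
      rcases htot y x with h' | h'
      · exact h h'
      · have hmem : y ∈ upperComp (· ≤ ·) ({x} : Set X) := by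
          intro z hz; rw [Set.mem_singleton_iff] at hz; subst hz
          exact ⟨h', fun hxy => h (le_of_eq hxy.symm)⟩
        have hby := hs2 y hmem
        exact (hb1 y hy).2 (le_antisymm (hb1 y hy).1 hby)
    refine ⟨?_, hub⟩
    by_contra hxS
    have hmem : x ∈ upperComp (· ≤ ·) S := fun y hy =>
      ⟨hub y hy, fun h => hxS (h ▸ hy)⟩
    exact hxb.2 (le_antisymm hxb.1 (hb2 x hmem))
  -- (iii) forward
  · rintro b ⟨hb1, hb2⟩
    have hlb : ∀ y ∈ S, b ≤ y := by
      intro y hy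
      exact hb2 y (fun z hz => hz y hy)
    have hbS : b ∈ S := by
      by_contra h
      have hmem : b ∈ lowerComp (· ≤ ·) S := fun y hy =>
        ⟨hlb y hy, fun he => h (by rw [he]; exact hy)⟩
      exact (hb1 b hmem).2 rfl
    exact ⟨hbS, fun y hy => hlb y hy⟩
  -- (iii) converse
  · rintro htot b ⟨hbS, hlb⟩
    refine ⟨fun z hz => hz b hbS, ?_⟩
    intro c hc
    by_contra h
    rcases htot b c with h' | h'
    · exact h h'
    · have hmem : c ∈ lowerComp (· ≤ ·) S := by
        intro y hy
        refine ⟨le_trans h' (hlb hy), fun he => ?_⟩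
        subst he
        exact h (hlb hy)
      exact (hc c hmem).2 rfl

end Paper
end

section
/- A poset (O, ≤) is an ordinal system relative to a universe 𝒰 if and only if it is a well-ordered set (hence totally ordered) such that {x}^↧ ∈ P_𝒰(O) for every x ∈ O, and X^↑ ≠ ∅ for every X ∈ P_𝒰(O). -/
namespace Paper

variable {X : Type*}

theorem stmt_8 {O : Type*} [PartialOrder O] (U : ZFSet) (hU : IsUniverse U) :
    IsOrdinalSystem U ((· ≤ ·) : O → O → Prop) ↔
      ((∀ S : Set O, S.Nonempty → ∃ b, IsLeast S b) ∧
       (∀ x y : O, x ≤ y ∨ y ≤ x) ∧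
       (∀ x : O, SmallSet U (lowerComp (· ≤ ·) ({x} : Set O))) ∧
       (∀ S : Set O, SmallSet U S → (upperComp (· ≤ ·) S).Nonempty)) := by
  constructor
  · rintro ⟨hpo, hO1, hO2⟩
    have hleast : ∀ S : Set O, S.Nonempty → ∃ b, IsLeast S b := by
      intro S hS
      obtain ⟨b, hb1, hb2⟩ := hO2 _ (hO1 S hS)
      have hlb : ∀ y ∈ S, b ≤ y := fun y hy => hb2 y (fun z hz => hz y hy)
      have hbS : b ∈ S := by
        by_contra hns
        exact (hb1 b (fun y hy => ⟨hlb y hy, fun h => hns (h ▸ hy)⟩)).2 rfl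
      exact ⟨b, hbS, hlb⟩
    refine ⟨hleast, ?_, fun x => hO1 {x} ⟨x, rfl⟩, fun S hS => ?_⟩
    · intro x y
      obtain ⟨b, hbmem, hb⟩ := hleast {x, y} ⟨x, Or.inl rfl⟩
      rcases hbmem with rfl | rfl
      · exact Or.inl (hb (Or.inr rfl))
      · exact Or.inr (hb (Or.inl rfl))
    · obtain ⟨b, hb1, _⟩ := hO2 S hS
      exact ⟨b, hb1⟩
  · rintro ⟨hleast, htot, h3, h4⟩
    refine ⟨inferInstance, ?_, ?_⟩
    · intro S hS
      obtain ⟨m, hmS, hm⟩ := hleast S hS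
      have heq : lowerComp (· ≤ ·) S = lowerComp (· ≤ ·) ({m} : Set O) := by
        ext x
        constructor
        · intro hx y hy
          have : y = m := hy
          exact this ▸ hx m hmS
        · intro hx y hy
          have hxm : ltR (· ≤ ·) x m := hx m rfl
          refine ⟨hxm.1.trans (hm hy), fun h => hxm.2 ?_⟩
          subst h
          exact le_antisymm hxm.1 (hm hy)
      rw [heq]; exact h3 m
    · intro S hS
      obtain ⟨b, hb1, hb2⟩ := hleast _ (h4 S hS)
      exact ⟨b, hb1, hb2⟩

end Paper
end

section
/- A poset (O, ≤) is an ordinal system relative to a universe 𝒰 if and only if (O1) holds (for every nonempty X ⊆ O, X^↧ ∈ P_𝒰(O)) together with: (O2a) for all X ∈ P_𝒰(O) the join ⋁X exists, and (O2b) x⁺ exists for each x ∈ O. -/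
/-!
If `S` has a greatest element `m`, then `m` is its join and `⋁⁺S = m⁺`; otherwise an element of `O` is an
upper bound of `S` iff it is a strict upper bound, so `⋁S` and `⋁⁺S` coincide. Hence (O2) splits
into (O2a) and (O2b), using for (O2b) that singletons are in `P_𝒰(O)`: by (O1) the universe has some
element `B`, and `{x} ≈ {B, B} ∈ 𝒰`.
-/

namespace Paper

variable {X : Type*}

lemma smallSet_singleton {U B : ZFSet}
    (hpair : ∀ x ∈ U, ∀ y ∈ U, ({x, y} : ZFSet) ∈ U) (hB : B ∈ U) (x : X) :
    SmallSet U ({x} : Set X) := by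
  have hBB : ({B, B} : ZFSet).toSet = {B} := Set.ext fun y => by
    change y ∈ ({B, B} : ZFSet) ↔ y = B
    simp
  exact ⟨{B, B}, hpair B hB B hB, by rw [hBB]; exact ⟨Equiv.ofUnique _ _⟩⟩

section PartialOrder

variable {O : Type*} [PartialOrder O] {S : Set O} {x b c : O}

lemma ltR_iff_lt : ltR (· ≤ ·) x b ↔ x < b := lt_iff_le_and_ne.symm

lemma isJoin_iff_isLUB : IsJoin (· ≤ ·) S b ↔ IsLUB S b := Iff.rfl

lemma mem_upperComp_singleton : c ∈ upperComp (· ≤ ·) {x} ↔ x < c := by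
  simp [upperComp, ltR_iff_lt]

lemma IsIncJoin.exists_isJoin (h : IsIncJoin (· ≤ ·) S b) : ∃ j, IsJoin (· ≤ ·) S j := by
  by_cases hmax : ∃ m, IsGreatest S m
  · obtain ⟨m, hm⟩ := hmax
    exact ⟨m, isJoin_iff_isLUB.2 hm.isLUB⟩
  · refine ⟨b, fun y hy => (h.1 y hy).1, fun c hc => h.2 c fun y hy => ⟨hc y hy, ?_⟩⟩
    rintro rfl
    exact hmax ⟨y, hy, hc⟩

lemma IsJoin.isIncJoin_of_notMem (h : IsJoin (· ≤ ·) S b) (hb : b ∉ S) :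
    IsIncJoin (· ≤ ·) S b :=
  ⟨fun y hy => ⟨h.1 y hy, fun hyb => hb (hyb ▸ hy)⟩, fun c hc => h.2 c fun y hy => (hc y hy).1⟩

lemma IsJoin.isIncJoin_of_mem (h : IsJoin (· ≤ ·) S b) (hb : b ∈ S) (hc : IsSuccOf (· ≤ ·) b c) :
    IsIncJoin (· ≤ ·) S c := by
  have hbc : b < c := mem_upperComp_singleton.1 hc.1
  refine ⟨fun y hy => ltR_iff_lt.2 ((h.1 y hy).trans_lt hbc), fun z hz => hc.2 z ?_⟩
  exact mem_upperComp_singleton.2 (ltR_iff_lt.1 (hz b hb))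

end PartialOrder

theorem stmt_10 {O : Type*} [PartialOrder O] (U : ZFSet) (hU : IsUniverse U) :
    IsOrdinalSystem U ((· ≤ ·) : O → O → Prop) ↔
      ((∀ S : Set O, S.Nonempty → SmallSet U (lowerComp (· ≤ ·) S)) ∧
       (∀ S : Set O, SmallSet U S → ∃ b, IsJoin (· ≤ ·) S b) ∧
       (∀ x : O, ∃ b, IsSuccOf (· ≤ ·) x b)) := by
  constructor
  · rintro ⟨-, hlower, hincJoin⟩
    refine ⟨hlower, fun S hS => (hincJoin S hS).elim fun _ hb => hb.exists_isJoin, fun x => ?_⟩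
    obtain ⟨B, hB, -⟩ := hlower {x} (Set.singleton_nonempty x)
    exact hincJoin {x} (smallSet_singleton hU.2.1 hB x)
  · rintro ⟨hlower, hjoin, hsucc⟩
    refine ⟨inferInstance, hlower, fun S hS => ?_⟩
    obtain ⟨b, hb⟩ := hjoin S hS
    by_cases hbS : b ∈ S
    · obtain ⟨c, hc⟩ := hsucc b
      exact ⟨c, hb.isIncJoin_of_mem hbS hc⟩
    · exact ⟨b, hb.isIncJoin_of_notMem hbS⟩

end Paper
end

section
/- (Transfinite induction for ordinal systems.) Let O be an ordinal system relative to a universe 𝒰 and let X ⊆ O satisfy: (I1) x⁺ ∈ X for every x ∈ X; (I2) for every limit ordinal x, if {x}^↧ ⊆ X then x ∈ X. Then X = O. -/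
namespace Paper

variable {X : Type*}

theorem stmt_11 {O : Type*} [PartialOrder O] (U : ZFSet) (hU : IsUniverse U)
    (hO : IsOrdinalSystem U ((· ≤ ·) : O → O → Prop)) (X : Set O)
    (hI1 : ∀ x ∈ X, ∀ b, IsSuccOf (· ≤ ·) x b → b ∈ X)
    (hI2 : ∀ x : O, (¬ ∃ y, IsSuccOf (· ≤ ·) y x) →
      lowerComp (· ≤ ·) ({x} : Set O) ⊆ X → x ∈ X) :
    X = Set.univ := by
  -- Step 1: any x whose strict lower set lies in X is itself in X.
  have key : ∀ x : O, lowerComp (· ≤ ·) ({x} : Set O) ⊆ X → x ∈ X := by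
    intro x hx
    by_cases h : ∃ y, IsSuccOf (· ≤ ·) y x
    · obtain ⟨y, hy⟩ := h
      have hyx : ltR (· ≤ ·) y x := hy.1 y rfl
      have hyX : y ∈ X := hx (by intro z hz; rw [Set.mem_singleton_iff] at hz; subst hz; exact hyx)
      exact hI1 y hyX x hy
    · exact hI2 x h hx
  ext x
  simp only [Set.mem_univ, iff_true]
  by_contra hxX
  have hne : (Xᶜ : Set O).Nonempty := ⟨x, hxX⟩
  obtain ⟨b, hb⟩ := hO.2.2 _ (hO.2.1 (Xᶜ : Set O) hne)
  -- b is a lower bound of Xᶜ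
  have hlb : ∀ s ∈ (Xᶜ : Set O), b ≤ s := by
    intro s hs
    exact hb.2 s (fun y hy => hy s hs)
  -- b ∈ Xᶜ
  have hbS : b ∈ (Xᶜ : Set O) := by
    by_contra hbX
    have : b ∈ lowerComp (· ≤ ·) (Xᶜ : Set O) := by
      intro s hs
      exact ⟨hlb s hs, fun he => hbX (he ▸ hs)⟩
    exact (hb.1 b this).2 rfl
  have hsub : lowerComp (· ≤ ·) ({b} : Set O) ⊆ X := by
    intro z hz
    have hzb : ltR (· ≤ ·) z b := hz b rfl
    by_contra hzX
    exact hzb.2 (le_antisymm hzb.1 (hlb z hzX))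
  exact hbS (key b hsub)

end Paper
end

section
/- Let O be an ordinal system relative to a universe 𝒰 and let X ⊆ O satisfy: (S1) X is down-closed in O (if x < y and y ∈ X then x ∈ X); (S2) X, with the restriction of the order of O, is itself an ordinal system relative to 𝒰. Then X = O. -/
namespace Paper

variable {X : Type*}

theorem stmt_12 {O : Type*} [PartialOrder O] (U : ZFSet) (hU : IsUniverse U)
    (hO : IsOrdinalSystem U ((· ≤ ·) : O → O → Prop)) (X : Set O)
    (hS1 : ∀ x y : O, x < y → y ∈ X → x ∈ X)
    (hS2 : IsOrdinalSystem U (fun a b : X => (a : O) ≤ (b : O))) :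
    X = Set.univ := by
  obtain ⟨_, hO1, hO2⟩ := hO
  have mem_iff : ∀ b x : O,
      x ∈ lowerComp ((· ≤ ·) : O → O → Prop) ({b} : Set O) ↔ x < b := by
    intro b x
    constructor
    · intro h
      exact lt_of_le_of_ne (h b rfl).1 (h b rfl).2
    · intro h z hz
      rw [Set.mem_singleton_iff] at hz
      subst hz
      exact ⟨h.le, h.ne⟩
  -- key lemma: if every y < o satisfies y < c, then o ≤ c
  have keyA : ∀ o c : O, (∀ y : O, y < o → y < c) → o ≤ c := by
    intro o c hc
    obtain ⟨b, hb1, hb2⟩ :=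
      hO2 (lowerComp ((· ≤ ·) : O → O → Prop) ({o} : Set O)) (hO1 _ ⟨o, rfl⟩)
    have hbo : b ≤ o := hb2 o (fun y hy => ⟨(hy o rfl).1, (hy o rfl).2⟩)
    have hbeq : b = o := by
      by_contra hne
      have hmem : b ∈ lowerComp ((· ≤ ·) : O → O → Prop) ({o} : Set O) :=
        (mem_iff o b).mpr (lt_of_le_of_ne hbo hne)
      exact (hb1 b hmem).2 rfl
    have : b ≤ c := by
      refine hb2 c ?_
      intro y hy
      have hyo : y < o := (mem_iff o y).mp hy
      exact ⟨(hc y hyo).le, (hc y hyo).ne⟩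
    exact hbeq ▸ this
  by_contra hne
  have hC : (Xᶜ).Nonempty := Set.nonempty_compl.mpr hne
  obtain ⟨b0, hb01, hb02⟩ :=
    hO2 (lowerComp ((· ≤ ·) : O → O → Prop) Xᶜ) (hO1 _ hC)
  have hle : ∀ s ∈ Xᶜ, b0 ≤ s := fun s hs => hb02 s (fun y hy => hy s hs)
  -- b0 is not in X
  have hb0notX : b0 ∉ X := by
    intro hmemX
    have hmem : b0 ∈ lowerComp ((· ≤ ·) : O → O → Prop) Xᶜ := by
      intro s hs
      exact ⟨hle s hs, fun h => hs (h ▸ hmemX)⟩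
    exact (hb01 b0 hmem).2 rfl
  -- everything below b0 is in X
  have hlow : ∀ y : O, y < b0 → y ∈ X := by
    intro y hy
    by_contra h
    exact hy.not_ge (hle y h)
  -- the strict lower set of b0, inside X
  set S' : Set X := {y : X | (y : O) < b0} with hS'
  have hsmall : SmallSet U S' := by
    obtain ⟨B, hB, ⟨e⟩⟩ := hO1 ({b0} : Set O) ⟨b0, rfl⟩
    refine ⟨B, hB, ⟨Equiv.trans ?_ e⟩⟩
    exact
      { toFun := fun y => ⟨y.1.1, (mem_iff b0 y.1.1).mpr y.2⟩
        invFun := fun y =>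
          ⟨⟨y.1, hlow y.1 ((mem_iff b0 y.1).mp y.2)⟩, (mem_iff b0 y.1).mp y.2⟩
        left_inv := fun y => rfl
        right_inv := fun y => rfl }
  obtain ⟨b', hb'1, hb'2⟩ := hS2.2.2 S' hsmall
  have h2 : ∀ y : O, y < b0 → y < (b' : O) := by
    intro y hy
    have hyX : y ∈ X := hlow y hy
    have hmem : (⟨y, hyX⟩ : X) ∈ S' := hy
    have hlt := hb'1 ⟨y, hyX⟩ hmem
    exact lt_of_le_of_ne hlt.1 (fun h => hlt.2 (Subtype.ext h))
  have hb0le : b0 ≤ (b' : O) := keyA b0 b' h2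
  rcases eq_or_lt_of_le hb0le with heq | hlt
  · exact hb0notX (heq ▸ b'.2)
  · exact hb0notX (hS1 b0 b' hlt b'.2)

end Paper
end

section
/- (Transfinite recursion for ordinal systems.) Let O be an ordinal system relative to a universe 𝒰, let X be a set, T : X → X a function, and V : P_𝒰(X) → X a function. Then there exists a unique function f : O → X satisfying: (R1) f(x⁺) = T(f(x)) for every x ∈ O, and (R2) f(x) = V({f(y) | y < x}) for every limit ordinal x ∈ O. -/
/-!
By (O1) and (O2), every nonempty `S ⊆ O` has a minimum, namely `⋁⁺(S^↧)`; so `<` is well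
founded and `O` is linear, which makes predecessors unique. The function is then defined by
well-founded recursion. The limit clause needs `f '' {y | y < x}` to lie in `P_𝒰`: the set
`{y | y < x} = {x}^↧` does by (O1), and images of small sets are small because, by (U3), a
universe contains every subset of each of its members.
-/

namespace Paper

variable {X : Type*}

universe u

lemma mem_unionImage {f : ZFSet.{u} → ZFSet.{u}} {I z : ZFSet} :
    z ∈ unionImage f I ↔ ∃ i ∈ I, z ∈ f i := by
  simp only [unionImage, ZFSet.mem_sUnion, @ZFSet.mem_image f (Classical.allZFSetDefinable _)]
  constructor
  · rintro ⟨_, ⟨i, hi, rfl⟩, hz⟩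
    exact ⟨i, hi, hz⟩
  · rintro ⟨i, hi, hz⟩
    exact ⟨f i, ⟨i, hi, rfl⟩, hz⟩

section Universe

variable {U : ZFSet}

/-- An `∈`-minimal element of a transitive set has no elements. -/
lemma empty_mem_of_isTransitive (hT : U.IsTransitive) {B : ZFSet} (hB : B ∈ U) :
    (∅ : ZFSet) ∈ U := by
  obtain ⟨y, hyU, hdisj⟩ := ZFSet.regularity U fun h => ZFSet.notMem_empty B (h ▸ hB)
  rcases ZFSet.eq_empty_or_nonempty y with rfl | ⟨z, hz⟩
  · exact hyU
  · exact absurd (ZFSet.mem_inter.2 ⟨hT y hyU hz, hz⟩) (hdisj ▸ ZFSet.notMem_empty z)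

lemma IsUniverse.singleton_mem (hU : IsUniverse U) {i : ZFSet} (hi : i ∈ U) :
    ({i} : ZFSet) ∈ U := by
  simpa using hU.2.1 i hi i hi

open Classical in
/-- A subset `B'` of `B` is the union of the family `i ↦ {i} ∩ B'` indexed by `B`. -/
lemma IsUniverse.mem_of_subset (hU : IsUniverse U) {B B' : ZFSet} (hB : B ∈ U)
    (hsub : B' ⊆ B) : B' ∈ U := by
  have hunion : unionImage (fun i => if i ∈ B' then {i} else ∅) B = B' := by
    ext z
    rw [mem_unionImage]
    constructor
    · rintro ⟨i, -, hz⟩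
      split_ifs at hz with hi
      · exact ZFSet.mem_singleton.1 hz ▸ hi
      · exact absurd hz (ZFSet.notMem_empty z)
    · intro hz
      exact ⟨z, hsub hz, by simp [hz]⟩
  rw [← hunion]
  refine hU.2.2 B hB _ fun i hi => ?_
  split_ifs
  · exact hU.singleton_mem (hU.1 B hB hi)
  · exact empty_mem_of_isTransitive hU.1 hB

variable {W : Type*}

lemma SmallSet.of_injective (hU : IsUniverse U) {A : Set X} (hA : SmallSet U A) {C : Set W}
    {ι : C → A} (hι : Function.Injective ι) : SmallSet U C := by
  obtain ⟨B, hB, ⟨e⟩⟩ := hA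
  let g : C → ZFSet := fun c => e (ι c)
  have hg : Function.Injective g := fun _ _ h => hι (e.injective (Subtype.ext h))
  let B' : ZFSet := B.sep (· ∈ Set.range g)
  have hrange : Set.range g = B'.toSet := by
    ext z
    change _ ↔ z ∈ B.sep _
    rw [ZFSet.mem_sep, iff_and_self]
    rintro ⟨c, rfl⟩
    exact (e (ι c)).2
  refine ⟨B', hU.mem_of_subset hB fun _ hz => (ZFSet.mem_sep.1 hz).1, ⟨?_⟩⟩
  exact (Equiv.ofInjective g hg).trans (Equiv.setCongr hrange)

lemma SmallSet.range (hU : IsUniverse U) {A : Set X} (hA : SmallSet U A) (g : A → W) :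
    SmallSet U (Set.range g) :=
  hA.of_injective hU (Function.injective_surjInv Set.rangeFactorization_surjective)

lemma SmallSet.image (hU : IsUniverse U) {A : Set X} (hA : SmallSet U A) (g : X → W) :
    SmallSet U (g '' A) :=
  Set.image_eq_range g A ▸ hA.range hU _

end Universe

section OrdinalSystem

variable {O : Type*} [PartialOrder O] {U : ZFSet}

@[simp]
lemma ltR_le_iff {x y : O} : ltR (· ≤ ·) x y ↔ x < y :=
  lt_iff_le_and_ne.symm

lemma lowerComp_singleton (x : O) : lowerComp (· ≤ ·) ({x} : Set O) = {y | y < x} := by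
  ext
  simp [lowerComp]

lemma IsSuccOf.lt {x b : O} (h : IsSuccOf (· ≤ ·) x b) : x < b :=
  ltR_le_iff.1 (h.1 x rfl)

namespace IsOrdinalSystem

variable (hO : IsOrdinalSystem U ((· ≤ ·) : O → O → Prop))
include hO

lemma smallSet_Iio (x : O) : SmallSet U {y | y < x} :=
  lowerComp_singleton x ▸ hO.2.1 {x} (Set.singleton_nonempty x)

/-- `⋁⁺(S^↧)` is a lower bound of `S`, and it lies in `S` since it is not below itself. -/
lemma exists_min {S : Set O} (hS : S.Nonempty) : ∃ m ∈ S, ∀ y ∈ S, m ≤ y := by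
  obtain ⟨b, hb_upper, hb_min⟩ := hO.2.2 _ (hO.2.1 S hS)
  have hb_le : ∀ y ∈ S, b ≤ y := fun y hy => hb_min y fun _ hd => hd y hy
  by_cases hbS : b ∈ S
  · exact ⟨b, hbS, hb_le⟩
  have hb_mem : b ∈ lowerComp (· ≤ ·) S := fun y hy =>
    ltR_le_iff.2 (lt_of_le_of_ne (hb_le y hy) fun h => hbS (h ▸ hy))
  exact (lt_irrefl b (ltR_le_iff.1 (hb_upper b hb_mem))).elim

lemma wellFounded_lt : WellFounded ((· < ·) : O → O → Prop) :=
  WellFounded.wellFounded_iff_has_min.2 fun _ hs =>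
    let ⟨m, hm, hmin⟩ := hO.exists_min hs
    ⟨m, hm, fun y hy hlt => (hlt.trans_le (hmin y hy)).false⟩

lemma le_total (x y : O) : x ≤ y ∨ y ≤ x := by
  obtain ⟨m, hm | hm, hmin⟩ := hO.exists_min (S := {x, y}) (Set.insert_nonempty x {y})
  · exact .inl (hm ▸ hmin y (by simp))
  · exact .inr (hm ▸ hmin x (by simp))

lemma isSuccOf_injective {y z b : O} (hy : IsSuccOf (· ≤ ·) y b)
    (hz : IsSuccOf (· ≤ ·) z b) : y = z := by
  have key : ∀ {y z : O}, IsSuccOf (· ≤ ·) y b → IsSuccOf (· ≤ ·) z b → ¬ y < z :=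
    fun hy hz hyz => (hz.lt.trans_le (hy.2 _ (by simpa [upperComp] using hyz))).false
  rcases hO.le_total y z with h | h
  · exact h.eq_of_not_lt (key hy hz)
  · exact (h.eq_of_not_lt (key hz hy)).symm

end IsOrdinalSystem

def IsOrdRecursive (U : ZFSet) (T : X → X) (V : (A : Set X) → SmallSet U A → X) (f : O → X) :
    Prop :=
  (∀ x b : O, IsSuccOf (· ≤ ·) x b → f b = T (f x)) ∧
  (∀ x : O, (¬ ∃ y, IsSuccOf (· ≤ ·) y x) →
    ∀ h : SmallSet U (f '' {y | y < x}), f x = V (f '' {y | y < x}) h)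

lemma IsOrdRecursive.eq {T : X → X} {V : (A : Set X) → SmallSet U A → X} {f g : O → X}
    (hU : IsUniverse U) (hO : IsOrdinalSystem U ((· ≤ ·) : O → O → Prop))
    (hf : IsOrdRecursive U T V f) (hg : IsOrdRecursive U T V g) : f = g := by
  funext x
  induction x using hO.wellFounded_lt.induction with
  | _ x ih =>
  by_cases hsucc : ∃ y, IsSuccOf (· ≤ ·) y x
  · obtain ⟨y, hy⟩ := hsucc
    rw [hf.1 y x hy, hg.1 y x hy, ih y hy.lt]
  · have himage : f '' {y | y < x} = g '' {y | y < x} := Set.image_congr ih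
    rw [hf.2 x hsucc ((hO.smallSet_Iio x).image hU f),
      hg.2 x hsucc ((hO.smallSet_Iio x).image hU g)]
    congr 1

open Classical in
noncomputable def ordRec (hU : IsUniverse U) (hO : IsOrdinalSystem U ((· ≤ ·) : O → O → Prop))
    (T : X → X) (V : (A : Set X) → SmallSet U A → X) : O → X :=
  hO.wellFounded_lt.fix fun x rec =>
    if h : ∃ y, IsSuccOf (· ≤ ·) y x then T (rec h.choose h.choose_spec.lt)
    else V (Set.range fun y : {y | y < x} => rec y y.2) ((hO.smallSet_Iio x).range hU _)

variable (hU : IsUniverse U) (hO : IsOrdinalSystem U ((· ≤ ·) : O → O → Prop))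
  (T : X → X) (V : (A : Set X) → SmallSet U A → X)

open Classical in
lemma ordRec_eq (x : O) :
    ordRec hU hO T V x =
      if h : ∃ y, IsSuccOf (· ≤ ·) y x then T (ordRec hU hO T V h.choose)
      else V (Set.range fun y : {y | y < x} => ordRec hU hO T V y)
        ((hO.smallSet_Iio x).range hU _) :=
  hO.wellFounded_lt.fix_eq _ x

lemma ordRec_succ {x b : O} (h : IsSuccOf (· ≤ ·) x b) :
    ordRec hU hO T V b = T (ordRec hU hO T V x) := by
  have hex : ∃ y, IsSuccOf (· ≤ ·) y b := ⟨x, h⟩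
  rw [ordRec_eq, dif_pos hex, ← hO.isSuccOf_injective hex.choose_spec h]

lemma ordRec_limit {x : O} (hx : ¬ ∃ y, IsSuccOf (· ≤ ·) y x)
    (h : SmallSet U (ordRec hU hO T V '' {y | y < x})) :
    ordRec hU hO T V x = V (ordRec hU hO T V '' {y | y < x}) h := by
  rw [ordRec_eq, dif_neg hx]
  congr 1
  exact (Set.image_eq_range _ _).symm

lemma isOrdRecursive_ordRec : IsOrdRecursive U T V (ordRec hU hO T V) :=
  ⟨fun _ _ => ordRec_succ hU hO T V, fun _ => ordRec_limit hU hO T V⟩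

end OrdinalSystem

theorem stmt_13 {O : Type*} [PartialOrder O] (U : ZFSet) (hU : IsUniverse U)
    (hO : IsOrdinalSystem U ((· ≤ ·) : O → O → Prop))
    {X : Type*} (T : X → X) (V : (A : Set X) → SmallSet U A → X) :
    ∃! f : O → X,
      (∀ x b : O, IsSuccOf (· ≤ ·) x b → f b = T (f x)) ∧
      (∀ x : O, (¬ ∃ y, IsSuccOf (· ≤ ·) y x) →
        ∀ h : SmallSet U (Set.image f {y | y < x}), f x = V (Set.image f {y | y < x}) h) :=
  ⟨ordRec hU hO T V, isOrdRecursive_ordRec hU hO T V,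
    fun _ hg => IsOrdRecursive.eq hU hO hg (isOrdRecursive_ordRec hU hO T V)⟩

end Paper
end
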